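/- Let A = ∏_p ℤ_p. For every abelian group M, the natural map M → (M ⊗ ℚ) ×_{M ⊗ A ⊗ ℚ} (M ⊗ A) into the pullback is an isomorphism; equivalently, the sequence 0 → M → (M ⊗ ℚ) ⊕ (M ⊗ A) → M ⊗ A ⊗ ℚ → 0 is exact. -/

import Mathlib

set_option synthInstance.maxHeartbeats 1000000
set_option maxHeartbeats 2000000

open scoped TensorProduct

/-- The prime `p` in `Nat.Primes` is prime. -/
instance (p : Nat.Primes) : Fact p.1.Prime := ⟨p.2⟩

/-- The profinite completion of `ℤ`: the product of the `p`-adic integers over all primes. -/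
noncomputable abbrev Zhat : Type := ∀ p : Nat.Primes, ℤ_[p.1]

variable (M : Type) [AddCommGroup M]

/-- The map `M → (M ⊗ ℚ) ⊕ (M ⊗ ∏ₚ ℤₚ)`, `m ↦ (m ⊗ 1, m ⊗ 1)`. -/
noncomputable def fractureFirst : M →ₗ[ℤ] (M ⊗[ℤ] ℚ) × (M ⊗[ℤ] Zhat) :=
  ((TensorProduct.mk ℤ M ℚ).flip (1 : ℚ)).prod ((TensorProduct.mk ℤ M Zhat).flip (1 : Zhat))

/-- The difference map `(M ⊗ ℚ) ⊕ (M ⊗ ∏ₚ ℤₚ) → M ⊗ (∏ₚ ℤₚ) ⊗ ℚ`,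
`(x, y) ↦ (image of x) - (image of y)`, where the images are induced by
`ℚ → (∏ₚ ℤₚ) ⊗ ℚ`, `q ↦ 1 ⊗ q` and `∏ₚ ℤₚ → (∏ₚ ℤₚ) ⊗ ℚ`, `a ↦ a ⊗ 1`. -/
noncomputable def fractureSecond :
    (M ⊗[ℤ] ℚ) × (M ⊗[ℤ] Zhat) →ₗ[ℤ] M ⊗[ℤ] (Zhat ⊗[ℤ] ℚ) :=
  (LinearMap.lTensor M ((TensorProduct.mk ℤ Zhat ℚ) (1 : Zhat))).comp
      (LinearMap.fst ℤ (M ⊗[ℤ] ℚ) (M ⊗[ℤ] Zhat)) -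
    (LinearMap.lTensor M ((TensorProduct.mk ℤ Zhat ℚ).flip (1 : ℚ))).comp
      (LinearMap.snd ℤ (M ⊗[ℤ] ℚ) (M ⊗[ℤ] Zhat))

/-! The square is `M ⊗` the Hasse square `ℤ → ℚ × Ẑ → Ẑ ⊗ ℚ`. That square is short exact because
`ℤ/n → Ẑ/nẐ` is bijective for `n ≠ 0`: injectivity (for `n` prime) makes a rational number whose
denominator divides its numerator in `Ẑ` an integer, and surjectivity (the Chinese remainder
theorem on the `p`-adic components) lets one clear denominators in `Ẑ ⊗ ℚ`. Tensoring with `M`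
keeps the right part exact; on the left, `M → M ⊗ Ẑ` is already injective since `Ẑ` is flat
and no prime is a unit in it, so `Ẑ` is faithfully flat over `ℤ`. -/

open TensorProduct

theorem Module.FaithfullyFlat.of_isLocalHom {A B : Type} [CommRing A] [IsPrincipalIdealRing A]
    [CommRing B] [Algebra A B] [Module.Flat A B] [IsLocalHom (algebraMap A B)] :
    Module.FaithfullyFlat A B := by
  refine (Module.FaithfullyFlat.iff_flat_and_proper_ideal A B).mpr ⟨‹_›, fun I hI htop => hI ?_⟩
  rw [← Submodule.IsPrincipal.span_singleton_generator I, Submodule.ideal_span_singleton_smul]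
    at htop
  obtain ⟨x, -, hx⟩ := (Submodule.mem_smul_pointwise_iff_exists _ _ _).mp
    (htop ▸ Submodule.mem_top : (1 : B) ∈ _)
  rw [Algebra.smul_def] at hx
  rw [← Submodule.IsPrincipal.span_singleton_generator I, Ideal.span_singleton_eq_top]
  exact IsLocalHom.map_nonunit _ (IsUnit.of_mul_eq_one x hx)

theorem Module.FaithfullyFlat.tmul_one_injective {A B : Type} [CommRing A] [CommRing B]
    [Algebra A B] [Module.FaithfullyFlat A B] (N : Type) [AddCommGroup N] [Module A N] :
    Function.Injective fun n : N => n ⊗ₜ[A] (1 : B) := fun a b hab =>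
  Module.FaithfullyFlat.tensorProduct_mk_injective (A := A) (B := B) N <| by
    simpa using congrArg (TensorProduct.comm A N B) hab

theorem exists_intCast_dvd_sub_mul {R : Type} [CommRing R] {m k : ℕ} (hmk : m.Coprime k) {a : R}
    (hm : ∃ r : ℤ, (m : R) ∣ a - r) (hk : ∃ r : ℤ, (k : R) ∣ a - r) :
    ∃ r : ℤ, ((m * k : ℕ) : R) ∣ a - r := by
  obtain ⟨r₁, h₁⟩ := hm
  obtain ⟨r₂, h₂⟩ := hk
  obtain ⟨u, v, huv⟩ := Nat.isCoprime_iff_coprime.mpr hmk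
  set r := r₂ * u * m + r₁ * v * k
  have hr₁ : (m : ℤ) ∣ r₁ - r := ⟨u * (r₁ - r₂), by linear_combination -r₁ * huv⟩
  have hr₂ : (k : ℤ) ∣ r₂ - r := ⟨v * (r₂ - r₁), by linear_combination -r₂ * huv⟩
  have key : ∀ (n : ℕ) (s : ℤ), (n : R) ∣ a - s → (n : ℤ) ∣ s - r → (n : R) ∣ a - r :=
    fun n s has hsr => by
      have hsr' := Int.cast_dvd_cast (α := R) _ _ hsr
      rw [Int.cast_natCast, Int.cast_sub] at hsr'
      simpa using dvd_add has hsr'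
  have hcop : IsCoprime (m : R) (k : R) := by
    simpa using (Nat.isCoprime_iff_coprime.mpr hmk).intCast (R := R)
  rw [Nat.cast_mul]
  exact ⟨r, hcop.mul_dvd (key m r₁ h₁ hr₁) (key k r₂ h₂ hr₂)⟩

theorem isLocalHom_algebraMap_int {R : Type} [CommRing R]
    (hpure : ∀ {p : ℕ} {m : ℤ}, p.Prime → (p : R) ∣ (m : R) → (p : ℤ) ∣ m) :
    IsLocalHom (algebraMap ℤ R) := by
  refine ⟨fun n hn => ?_⟩
  rw [Int.isUnit_iff_natAbs_eq]
  by_contra h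
  obtain ⟨p, hp, hpn⟩ := Nat.exists_prime_and_dvd h
  have hp1 : (p : R) ∣ ((1 : ℤ) : R) := by
    simpa using (Int.cast_dvd_cast (α := R) _ _ (Int.natCast_dvd.mpr hpn)).trans hn.dvd
  exact hp.one_lt.ne' (Nat.dvd_one.mp (Int.natCast_dvd_natCast.mp (hpure hp hp1)))

namespace Hasse

variable (R : Type) [CommRing R]

noncomputable def first : ℤ →ₗ[ℤ] ℚ × R :=
  (Algebra.linearMap ℤ ℚ).prod (Algebra.linearMap ℤ R)

noncomputable def second : ℚ × R →ₗ[ℤ] R ⊗[ℤ] ℚ :=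
  (TensorProduct.mk ℤ R ℚ 1) ∘ₗ LinearMap.fst ℤ ℚ R -
    (TensorProduct.mk ℤ R ℚ).flip 1 ∘ₗ LinearMap.snd ℤ ℚ R

variable {R}

@[simp] lemma first_apply (n : ℤ) : first R n = ((n : ℚ), (n : R)) := by
  simp [first]

@[simp] lemma second_apply (x : ℚ × R) : second R x = 1 ⊗ₜ x.1 - x.2 ⊗ₜ 1 := rfl

lemma intCast_mul_tmul (n : ℤ) (a : R) (q : ℚ) :
    ((n : R) * a) ⊗ₜ[ℤ] q = a ⊗ₜ ((n : ℚ) * q) := by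
  rw [← zsmul_eq_mul, ← zsmul_eq_mul, smul_tmul]

lemma intCast_tmul_one (n : ℤ) : (n : R) ⊗ₜ[ℤ] (1 : ℚ) = 1 ⊗ₜ (n : ℚ) := by
  simpa using intCast_mul_tmul n (1 : R) 1

lemma tmul_one_injective [Module.Flat ℤ R] :
    Function.Injective fun a : R => a ⊗ₜ[ℤ] (1 : ℚ) := fun a b hab =>
  Module.Flat.tensorProduct_mk_injective ℤ R ℚ <| by
    simpa using congrArg (TensorProduct.comm ℤ R ℚ) hab

lemma den_eq_one_of_natCast_den_dvd
    (hpure : ∀ {p : ℕ} {m : ℤ}, p.Prime → (p : R) ∣ (m : R) → (p : ℤ) ∣ m)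
    {q : ℚ} (h : (q.den : R) ∣ (q.num : R)) : q.den = 1 := by
  by_contra hden
  obtain ⟨p, hp, hpd⟩ := Nat.exists_prime_and_dvd hden
  have hpn : (p : ℤ) ∣ q.num := hpure hp ((Nat.cast_dvd_cast hpd).trans h)
  have := Nat.dvd_gcd (Int.natCast_dvd.mp hpn) hpd
  rw [q.reduced.gcd_eq_one] at this
  exact hp.one_lt.ne' (Nat.dvd_one.mp this)

theorem exact_first_second [Module.Flat ℤ R]
    (hpure : ∀ {p : ℕ} {m : ℤ}, p.Prime → (p : R) ∣ (m : R) → (p : ℤ) ∣ m) :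
    Function.Exact (first R) (second R) := by
  rintro ⟨q, a⟩
  rw [second_apply, sub_eq_zero, eq_comm]
  constructor
  · intro h
    have hden : (q.den : R) * a = q.num := tmul_one_injective <| by
      calc ((q.den : R) * a) ⊗ₜ[ℤ] (1 : ℚ) = (q.den : ℤ) • (a ⊗ₜ[ℤ] (1 : ℚ)) := by
            rw [smul_tmul', zsmul_eq_mul]; push_cast; rfl
        _ = 1 ⊗ₜ ((q.den : ℤ) • q) := by rw [h, tmul_smul]
        _ = (q.num : R) ⊗ₜ[ℤ] (1 : ℚ) := by
            rw [intCast_tmul_one, zsmul_eq_mul]; push_cast; rw [Rat.den_mul_eq_num]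
    have hq : (q.num : ℚ) = q := Rat.coe_int_num_of_den_eq_one
      (den_eq_one_of_natCast_den_dvd hpure (Dvd.intro a hden))
    refine ⟨q.num, Prod.ext hq (tmul_one_injective ?_)⟩
    rw [← hq] at h
    simpa [intCast_tmul_one] using h.symm
  · rintro ⟨n, hn⟩
    obtain ⟨rfl, rfl⟩ := Prod.ext_iff.mp hn.symm
    simp [intCast_tmul_one]

theorem surjective_second
    (hdense : ∀ {n : ℕ}, n ≠ 0 → ∀ a : R, ∃ r : ℤ, (n : R) ∣ a - r) :
    Function.Surjective (second R) := by
  intro z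
  induction z using TensorProduct.induction_on with
  | zero => exact ⟨0, map_zero _⟩
  | add x y hx hy =>
    obtain ⟨x', rfl⟩ := hx
    obtain ⟨y', rfl⟩ := hy
    exact ⟨x' + y', map_add _ _ _⟩
  | tmul a q =>
    obtain ⟨r, b, hb⟩ := hdense q.den_nz (q.num * a)
    refine ⟨((r / q.den : ℚ), -b), ?_⟩
    have hq : (q.den : ℚ) ≠ 0 := Nat.cast_ne_zero.mpr q.den_nz
    calc 1 ⊗ₜ[ℤ] (r / q.den : ℚ) - (-b) ⊗ₜ[ℤ] (1 : ℚ)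
        = ((r : R) * 1 + ((q.den : ℤ) : R) * b) ⊗ₜ[ℤ] (1 / q.den : ℚ) := by
          rw [add_tmul, intCast_mul_tmul, intCast_mul_tmul, neg_tmul, sub_neg_eq_add]
          congr 2 <;> simp [div_eq_mul_inv, hq]
      _ = ((q.num : R) * a) ⊗ₜ[ℤ] (1 / q.den : ℚ) := by
          rw [mul_one, Int.cast_natCast, ← hb, add_sub_cancel]
      _ = a ⊗ₜ q := by
          rw [intCast_mul_tmul, mul_one_div, Rat.num_div_den]

end Hasse

namespace Zhat

theorem prime_dvd_of_natCast_dvd_intCast {p : ℕ} {m : ℤ} (hp : p.Prime)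
    (h : (p : Zhat) ∣ (m : Zhat)) : (p : ℤ) ∣ m := by
  have := Fact.mk hp
  have hP := map_dvd (Pi.evalRingHom (fun q : Nat.Primes => ℤ_[q.1]) ⟨p, hp⟩) h
  rw [map_natCast, map_intCast, ← PadicInt.norm_lt_one_iff_dvd] at hP
  exact PadicInt.norm_intCast_lt_one_iff.mp hP

theorem exists_intCast_dvd_sub_of_primePow {p : ℕ} (hp : p.Prime) (k : ℕ) (a : Zhat) :
    ∃ r : ℤ, ((p ^ k : ℕ) : Zhat) ∣ a - r := by
  have := Fact.mk hp
  let P : Nat.Primes := ⟨p, hp⟩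
  refine ⟨PadicInt.appr (a P) k, ?_⟩
  have hdvd : ∀ q : Nat.Primes, ((p ^ k : ℕ) : ℤ_[q.1]) ∣ a q - PadicInt.appr (a P) k := by
    intro q
    by_cases hq : q = P
    · subst hq
      simpa [Ideal.mem_span_singleton] using PadicInt.appr_spec k (a P)
    · apply IsUnit.dvd
      rw [PadicInt.isUnit_iff, PadicInt.norm_natCast_eq_one_iff]
      exact Nat.Coprime.pow_right k ((Nat.coprime_primes q.2 hp).mpr fun h => hq (Subtype.ext h))
  choose c hc using hdvd
  exact ⟨c, funext fun q => by simpa using hc q⟩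

theorem exists_intCast_dvd_sub {n : ℕ} (hn : n ≠ 0) (a : Zhat) :
    ∃ r : ℤ, (n : Zhat) ∣ a - r := by
  induction n using Nat.recOnPosPrimePosCoprime with
  | prime_pow p k hp _ => exact exists_intCast_dvd_sub_of_primePow hp k a
  | zero => exact absurd rfl hn
  | one => exact ⟨0, by simp⟩
  | coprime m k hm hk hmk ihm ihk =>
    exact exists_intCast_dvd_sub_mul hmk (ihm (by omega)) (ihk (by omega))

instance : IsLocalHom (algebraMap ℤ Zhat) :=
  isLocalHom_algebraMap_int prime_dvd_of_natCast_dvd_intCast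

instance : Module.FaithfullyFlat ℤ Zhat := .of_isLocalHom

end Zhat

theorem fractureFirst_comp_rid :
    fractureFirst M ∘ₗ (TensorProduct.rid ℤ M).toLinearMap =
      (TensorProduct.prodRight ℤ ℤ M ℚ Zhat).toLinearMap ∘ₗ (Hasse.first Zhat).lTensor M := by
  refine TensorProduct.ext' fun m n => ?_
  simp only [LinearMap.comp_apply, LinearEquiv.coe_coe, TensorProduct.rid_tmul,
    LinearMap.lTensor_tmul, Hasse.first_apply, prodRight_tmul, map_zsmul]
  change n • (m ⊗ₜ[ℤ] (1 : ℚ), m ⊗ₜ[ℤ] (1 : Zhat)) = _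
  rw [Prod.smul_mk, ← tmul_smul, ← tmul_smul, Int.smul_one_eq_cast, Int.smul_one_eq_cast]

theorem fractureSecond_comp_prodRight :
    fractureSecond M ∘ₗ (TensorProduct.prodRight ℤ ℤ M ℚ Zhat).toLinearMap =
      (Hasse.second Zhat).lTensor M := by
  refine TensorProduct.ext' fun m x => ?_
  rw [LinearMap.comp_apply, LinearEquiv.coe_coe, prodRight_tmul]
  exact (tmul_sub m _ _).symm

/-- The arithmetic fracture square for an arbitrary abelian group `M`: the sequence
`0 → M → (M ⊗ ℚ) ⊕ (M ⊗ ∏ₚ ℤₚ) → M ⊗ (∏ₚ ℤₚ) ⊗ ℚ → 0` is exact; equivalently `M`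
is the pullback of its rationalization and its tensor with the profinite completion. -/
theorem fracture_square_exact :
    Function.Injective (fractureFirst M) ∧
      Function.Exact (fractureFirst M) (fractureSecond M) ∧
      Function.Surjective (fractureSecond M) := by
  have hexact := Hasse.exact_first_second Zhat.prime_dvd_of_natCast_dvd_intCast
  have hsurj := Hasse.surjective_second Zhat.exists_intCast_dvd_sub
  have hladder : fractureSecond M ∘ₗ (prodRight ℤ ℤ M ℚ Zhat).toLinearMap =
      (LinearEquiv.refl ℤ _).toLinearMap ∘ₗ (Hasse.second Zhat).lTensor M :=
    fractureSecond_comp_prodRight M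
  refine ⟨fun m m' h => Module.FaithfullyFlat.tmul_one_injective (B := Zhat) M
    (congrArg Prod.snd h), ?_, ?_⟩
  · exact (Function.Exact.iff_of_ladder_linearEquiv (fractureFirst_comp_rid M) hladder).mpr
      (lTensor_exact M hexact hsurj)
  · have h := LinearMap.lTensor_surjective M hsurj
    rw [← fractureSecond_comp_prodRight] at h
    exact Function.Surjective.of_comp h
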